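/- Let G be a simple graph with vertex set V, and let a group Γ act on V by graph automorphisms of G. Fix a vertex v₀ ∈ V and a subset X ⊆ Γ that generates Γ. If for every g ∈ X ∪ X⁻¹ the vertices v₀ and g • v₀ are joined by a walk in G, then for every element g ∈ Γ the vertices v₀ and g • v₀ are joined by a walk in G. -/

import Mathlib

namespace SimpleGraph

variable {V Γ : Type*} [Group Γ] [MulAction Γ V] {G : SimpleGraph V}

theorem Reachable.smul_of_adj_smul (hG : ∀ (g : Γ) (u v : V), G.Adj u v → G.Adj (g • u) (g • v))
    (g : Γ) {u v : V} (h : G.Reachable u v) : G.Reachable (g • u) (g • v) :=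
  h.map ⟨(g • ·), fun huv => hG g _ _ huv⟩

/-- The stabilizer of the connected component of `v₀`. -/
def reachableSubgroup (hG : ∀ (g : Γ) (u v : V), G.Adj u v → G.Adj (g • u) (g • v)) (v₀ : V) :
    Subgroup Γ where
  carrier := {g | G.Reachable v₀ (g • v₀)}
  one_mem' := show G.Reachable v₀ ((1 : Γ) • v₀) by rw [one_smul]
  mul_mem' {a b} ha hb := ha.trans (mul_smul a b v₀ ▸ hb.smul_of_adj_smul hG a)
  inv_mem' {a} ha := show G.Reachable v₀ (a⁻¹ • v₀) by
    simpa only [inv_smul_smul] using (ha.smul_of_adj_smul hG a⁻¹).symm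

end SimpleGraph

/-- The key inductive step in Putman's trick: if a group `Γ` acts on the vertex set of
a simple graph `G` by graph automorphisms, `X` generates `Γ`, and the base vertex `v₀`
is reachable from `g • v₀` for every `g ∈ X ∪ X⁻¹`, then `v₀` is reachable from
`g • v₀` for every `g ∈ Γ`. -/
theorem putman_trick_orbit_reachable {V : Type*} {Γ : Type*} [Group Γ] [MulAction Γ V]
    (G : SimpleGraph V)
    (h_aut : ∀ (g : Γ) (u v : V), G.Adj u v ↔ G.Adj (g • u) (g • v))
    (v₀ : V) (X : Set Γ) (h_gen : Subgroup.closure X = ⊤)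
    (h_edge : ∀ g ∈ X ∪ X⁻¹, G.Reachable v₀ (g • v₀)) :
    ∀ g : Γ, G.Reachable v₀ (g • v₀) := by
  intro g
  have hX : X ⊆ G.reachableSubgroup (fun g u v => (h_aut g u v).mp) v₀ :=
    fun x hx => h_edge x (Or.inl hx)
  exact (Subgroup.closure_le _).mpr hX (h_gen ▸ Subgroup.mem_top g)
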